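/- arXiv:2504.00553 — 2 statements merged into one kernel-verified Lean document; each statement's English description precedes it below -/
import Mathlib

section
/- For every finite simple graph G, the star b-chromatic number S_b(G) equals the largest integer k such that there exists a star k-coloring of G in which every color class V_i, i ∈ [k], contains a star b-vertex. -/
/-!
Definitions for star colorings, star recoloring steps, the strict partial order `≺ₛ`,
star b-vertices, the star (b-)chromatic number, star degrees and related notions,
following Božović, Mesarič Štesl, Peterin,
"On star b-chromatic number of a graph".
-/

variable {V : Type*}

/-- A proper coloring which is a *star coloring*: no path on four vertices
(vertices `a-b-x-y` with the three edges `ab`, `bx`, `xy`) is bicolored,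
i.e. the union of any two color classes induces a star forest. -/
def IsStarColoring (G : SimpleGraph V) (c : V → ℕ) : Prop :=
  (∀ ⦃u w⦄, G.Adj u w → c u ≠ c w) ∧
  ∀ a b x y : V, G.Adj a b → G.Adj b x → G.Adj x y →
    a ≠ x → b ≠ y → a ≠ y → ¬(c a = c x ∧ c b = c y)

/-- The set of colors used by a coloring. -/
def colorsUsed [Fintype V] (c : V → ℕ) : Finset ℕ :=
  Finset.image c Finset.univ

/-- `c'` is obtained from `c` by a *star recoloring step*: some color class `Vᵢ`
of the star coloring `c` is completely recolored, each of its vertices receiving one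
of the remaining colors of `c`, so that the result `c'` is again a star coloring
(using the colors of `c` minus `i`). We write `c' ⊲ₛ c`. -/
def StarRecolorStep [Fintype V] (G : SimpleGraph V) (c' c : V → ℕ) : Prop :=
  IsStarColoring G c ∧ IsStarColoring G c' ∧
  ∃ i ∈ colorsUsed c,
    (∀ v, c v ≠ i → c' v = c v) ∧
    ∀ v, c v = i → c' v ≠ i ∧ c' v ∈ colorsUsed c

/-- A minimal element of the strict partial order `≺ₛ` (the transitive closure of
the star recoloring step relation `⊲ₛ`): a star coloring on which no star
recoloring step can be performed. -/
def IsStarBColoring [Fintype V] (G : SimpleGraph V) (c : V → ℕ) : Prop :=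
  IsStarColoring G c ∧ ∀ c', ¬ StarRecolorStep G c' c

/-- The *star b-chromatic number* `Sᵦ(G)`: the maximum number of colors used by a
minimal element of `≺ₛ`. -/
noncomputable def starBChromaticNumber [Fintype V] (G : SimpleGraph V) : ℕ :=
  sSup {n | ∃ c : V → ℕ, IsStarBColoring G c ∧ (colorsUsed c).card = n}

/-- The *star chromatic number* `S(G)`: the minimum number of colors in a star coloring. -/
noncomputable def starChromaticNumber [Fintype V] (G : SimpleGraph V) : ℕ :=
  sInf {n | ∃ c : V → ℕ, IsStarColoring G c ∧ (colorsUsed c).card = n}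

/-- A color `j` is *blocked* for the vertex `v` under the star coloring `c`
if `j` is the color of `v` itself, or recoloring `v` alone with `j` destroys
the star coloring property. -/
def ColorBlockedFor [DecidableEq V] (G : SimpleGraph V) (c : V → ℕ) (v : V) (j : ℕ) : Prop :=
  j = c v ∨ ¬ IsStarColoring G (Function.update c v j)

/-- A color of `c` which is not blocked for `v` is *available* for `v`. -/
def ColorAvailableFor [Fintype V] [DecidableEq V] (G : SimpleGraph V) (c : V → ℕ)
    (v : V) (j : ℕ) : Prop :=
  j ∈ colorsUsed c ∧ ¬ ColorBlockedFor G c v j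

/-- `u-b-x-w` is an induced path on four vertices of `G`. -/
def IsInducedP4 (G : SimpleGraph V) (u b x w : V) : Prop :=
  G.Adj u b ∧ G.Adj b x ∧ G.Adj x w ∧
  ¬ G.Adj u x ∧ ¬ G.Adj b w ∧ ¬ G.Adj u w ∧
  u ≠ x ∧ b ≠ w ∧ u ≠ w

/-- The relation `~ᵢ` on a color class: two vertices of the same color joined
by an induced path on four vertices. -/
def P4Rel (G : SimpleGraph V) (c : V → ℕ) (u w : V) : Prop :=
  c u = c w ∧ ∃ b x, IsInducedP4 G u b x w

/-- The `P₄`-system of `v`: its equivalence class under the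
reflexive-transitive closure of `~ᵢ`. -/
def P4System (G : SimpleGraph V) (c : V → ℕ) (v : V) : Set V :=
  {u | Relation.ReflTransGen (P4Rel G c) v u}

/-- An available color `j` for `v` is *blocked for the `P₄`-system of `v`* if every
recoloring of the color class of `v` (each vertex receiving an available color)
in which `v` is recolored by `j` yields a bicolored path on four vertices between
two vertices of the `P₄`-system of `v`. -/
def BlockedForP4System [Fintype V] [DecidableEq V] (G : SimpleGraph V) (c : V → ℕ)
    (v : V) (j : ℕ) : Prop :=
  ∀ c' : V → ℕ,
    (∀ u, c u ≠ c v → c' u = c u) →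
    (∀ u, c u = c v → ColorAvailableFor G c u (c' u)) →
    c' v = j →
    ∃ u w b x, u ∈ P4System G c v ∧ w ∈ P4System G c v ∧
      G.Adj u b ∧ G.Adj b x ∧ G.Adj x w ∧ u ≠ x ∧ b ≠ w ∧ u ≠ w ∧
      c' u = c' x ∧ c' b = c' w

/-- A *star b-vertex*: every available color for `v` is blocked for its `P₄`-system. -/
def IsStarBVertex [Fintype V] [DecidableEq V] (G : SimpleGraph V) (c : V → ℕ) (v : V) : Prop :=
  ∀ j, ColorAvailableFor G c v j → BlockedForP4System G c v j

/-- The *star degree* `dˢ_G(v)` of a vertex: the maximum number of colors blocked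
for `v` over all star colorings of `G`. -/
noncomputable def starDegree [Fintype V] [DecidableEq V] (G : SimpleGraph V) (v : V) : ℕ :=
  sSup {n | ∃ c : V → ℕ, IsStarColoring G c ∧
    {j | j ∈ colorsUsed c ∧ ColorBlockedFor G c v j}.ncard = n}

/-- The `mₛ`-degree of a graph: the largest `k` such that `G` has `k` vertices
of star degree at least `k - 1` (equivalently, with the vertices ordered by
non-increasing star degree, `mₛ(G) = max {i : i - 1 ≤ dˢ_G(vᵢ)}`). -/
noncomputable def msDegree [Fintype V] [DecidableEq V] (G : SimpleGraph V) : ℕ :=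
  sSup {k | ∃ s : Finset V, s.card = k ∧ ∀ v ∈ s, k - 1 ≤ starDegree G v}

/-- The maximum degree `Δ(G)` of a graph. -/
noncomputable def maxDeg (G : SimpleGraph V) : ℕ :=
  sSup {d | ∃ v : V, (G.neighborSet v).ncard = d}

/-- The *b-chromatic number* `φ(G)`: the maximum number of colors of a proper coloring
in which every color class contains a vertex whose closed neighborhood contains
all the colors. -/
noncomputable def bChromaticNumber [Fintype V] (G : SimpleGraph V) : ℕ :=
  sSup {k | ∃ c : V → ℕ, (∀ ⦃u w⦄, G.Adj u w → c u ≠ c w) ∧ (colorsUsed c).card = k ∧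
    ∀ i ∈ colorsUsed c, ∃ v, c v = i ∧
      ∀ j ∈ colorsUsed c, ∃ u, (u = v ∨ G.Adj v u) ∧ c u = j}

/-- The join `G ∨ H` of two simple graphs: disjoint union of `G` and `H`
together with all edges between the two vertex sets. -/
def graphJoin {α β : Type*} (G : SimpleGraph α) (H : SimpleGraph β) :
    SimpleGraph (α ⊕ β) where
  Adj x y :=
    (∃ a b, x = Sum.inl a ∧ y = Sum.inl b ∧ G.Adj a b) ∨
    (∃ a b, x = Sum.inr a ∧ y = Sum.inr b ∧ H.Adj a b) ∨
    (∃ a b, x = Sum.inl a ∧ y = Sum.inr b) ∨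
    (∃ a b, x = Sum.inr a ∧ y = Sum.inl b)
  symm := by
    constructor
    rintro x y (⟨a,b,rfl,rfl,h⟩|⟨a,b,rfl,rfl,h⟩|⟨a,b,rfl,rfl⟩|⟨a,b,rfl,rfl⟩)
    · exact Or.inl ⟨b, a, rfl, rfl, h.symm⟩
    · exact Or.inr (Or.inl ⟨b, a, rfl, rfl, h.symm⟩)
    · exact Or.inr (Or.inr (Or.inr ⟨b, a, rfl, rfl⟩))
    · exact Or.inr (Or.inr (Or.inl ⟨b, a, rfl, rfl⟩))
  loopless := by
    constructor
    rintro x (⟨a,b,h1,h2,h⟩|⟨a,b,h1,h2,h⟩|⟨a,b,h1,h2⟩|⟨a,b,h1,h2⟩) <;> subst h1 <;>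
      simp_all [SimpleGraph.irrefl]

/-- `N₂(v)`: vertices at distance exactly two from `v`. -/
def distTwoSet (G : SimpleGraph V) (v : V) : Set V := {u | G.dist v u = 2}

/-- `N₃(v)`: vertices at distance exactly three from `v`. -/
def distThreeSet (G : SimpleGraph V) (v : V) : Set V := {u | G.dist v u = 3}

/-- `X(v)`: vertices at distance two from `v` with no neighbor at distance three from `v`. -/
def XSet (G : SimpleGraph V) (v : V) : Set V :=
  {u | u ∈ distTwoSet G v ∧ ∀ w ∈ distThreeSet G v, ¬ G.Adj u w}

/-- `Y(v)`: vertices at distance two from `v` having a neighbor at distance three from `v`. -/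
def YSet (G : SimpleGraph V) (v : V) : Set V := distTwoSet G v \ XSet G v

/-!
A star recoloring step on the class `Vᵢ` gives each vertex of `Vᵢ` an available color and
creates no bicolored `P₄`, so it is impossible when `Vᵢ` contains a star b-vertex. Conversely,
if `Vᵢ` has no star b-vertex, every `P₄`-system of `Vᵢ` admits a recoloring by available colors
without bicolored `P₄` between its own vertices. These recolorings can be carried out
simultaneously: in a recoloring of `Vᵢ` by available colors, a bicolored `P₄` must be an induced
`P₄` whose two ends lie in `Vᵢ`, hence in one `P₄`-system, and whose inner vertices keep their
colors. So the minimal elements of `≺ₛ` are exactly the star colorings with a star b-vertex in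
every class, and they exist since every step removes a color.
-/

open Function

def IsProperColoring (G : SimpleGraph V) (c : V → ℕ) : Prop :=
  ∀ ⦃u w⦄, G.Adj u w → c u ≠ c w

def IsBicoloredP4 (G : SimpleGraph V) (c : V → ℕ) (a b x y : V) : Prop :=
  G.Adj a b ∧ G.Adj b x ∧ G.Adj x y ∧ a ≠ x ∧ b ≠ y ∧ a ≠ y ∧ c a = c x ∧ c b = c y

section StarColoring

variable {G : SimpleGraph V} {c d : V → ℕ} {a b x y u : V} {i j : ℕ}

theorem isStarColoring_iff :
    IsStarColoring G c ↔ IsProperColoring G c ∧ ∀ a b x y, ¬ IsBicoloredP4 G c a b x y := by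
  simp only [IsStarColoring, IsProperColoring, IsBicoloredP4, not_and]

theorem IsStarColoring.isProperColoring (hc : IsStarColoring G c) : IsProperColoring G c :=
  (isStarColoring_iff.mp hc).1

theorem IsStarColoring.not_isBicoloredP4 (hc : IsStarColoring G c) :
    ¬ IsBicoloredP4 G c a b x y :=
  (isStarColoring_iff.mp hc).2 a b x y

theorem isStarColoring_of_injective (hc : Function.Injective c) : IsStarColoring G c :=
  ⟨fun _ _ h hcuw => G.loopless.irrefl _ (hc hcuw ▸ h),
    fun _ _ _ _ _ _ _ hax _ _ h => hax (hc h.1)⟩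

theorem IsBicoloredP4.reverse (h : IsBicoloredP4 G c a b x y) : IsBicoloredP4 G c y x b a := by
  obtain ⟨hab, hbx, hxy, hax, hby, hay, hcax, hcby⟩ := h
  exact ⟨hxy.symm, hbx.symm, hab.symm, hby.symm, hax.symm, hay.symm, hcby.symm, hcax.symm⟩

theorem IsBicoloredP4.congr (h : IsBicoloredP4 G c a b x y) (hcd : Set.EqOn c d {a, b, x, y}) :
    IsBicoloredP4 G d a b x y := by
  obtain ⟨hab, hbx, hxy, hax, hby, hay, hcax, hcby⟩ := h
  refine ⟨hab, hbx, hxy, hax, hby, hay, ?_, ?_⟩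
  · rw [← hcd (by simp), ← hcd (by simp), hcax]
  · rw [← hcd (by simp), ← hcd (by simp), hcby]

theorem IsStarColoring.not_recolored_of_isBicoloredP4 (hc : IsStarColoring G c)
    (hfix : ∀ v, c v ≠ i → d v = c v) (h : IsBicoloredP4 G d a b x y) (ha : c a = i) :
    c x ≠ i := by
  intro hx
  obtain ⟨hab, hbx, hxy, hax, hby, hay, -, hdby⟩ := h
  have hb : c b ≠ i := fun hb => hc.isProperColoring hab (ha.trans hb.symm)
  have hy : c y ≠ i := fun hy => hc.isProperColoring hxy (hx.trans hy.symm)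
  refine hc.not_isBicoloredP4 ⟨hab, hbx, hxy, hax, hby, hay, ha.trans hx.symm, ?_⟩
  rw [← hfix b hb, ← hfix y hy, hdby]

variable [DecidableEq V]

theorem IsProperColoring.update (hc : IsProperColoring G c) (hj : ∀ w, G.Adj u w → c w ≠ j) :
    IsProperColoring G (Function.update c u j) := by
  intro p q hpq
  by_cases hp : p = u <;> by_cases hq : q = u <;> subst_vars
  · exact absurd hpq (G.loopless.irrefl _)
  · simpa [hq] using (hj q hpq).symm
  · simpa [hp] using hj p hpq.symm
  · simpa [hp, hq] using hc hpq

/-- A bicolored `P₄` of `update c u j` through a vertex of the old color of `u` avoids `u`. -/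
theorem IsBicoloredP4.of_update (hc : IsProperColoring G c) (hj : j ≠ c u)
    (h : IsBicoloredP4 G (update c u j) a b x y) (ha : update c u j a = c u) :
    IsBicoloredP4 G c a b x y := by
  refine h.congr fun v hv => ?_
  obtain ⟨hab, -, hxy, -, -, -, hax, -⟩ := h
  have hau : a ≠ u := by rintro rfl; simp [hj] at ha
  have hxu : x ≠ u := by rintro rfl; rw [hax] at ha; simp [hj] at ha
  rw [update_of_ne hau] at ha
  rw [update_of_ne hau, update_of_ne hxu, ha] at hax
  have hbu : b ≠ u := by rintro rfl; exact hc hab ha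
  have hyu : y ≠ u := by rintro rfl; exact hc hxy hax.symm
  simp only [Set.mem_insert_iff, Set.mem_singleton_iff] at hv
  rcases hv with rfl | rfl | rfl | rfl <;> exact update_of_ne ‹_› _ _

theorem IsStarColoring.update_of_recolor (hc : IsStarColoring G c) (hd : IsStarColoring G d)
    (hfix : ∀ v, c v ≠ c u → d v = c v) (hu : d u ≠ c u) :
    IsStarColoring G (update c u (d u)) := by
  set e := update c u (d u)
  have hagree : ∀ v, e v ≠ c u → e v = d v := by
    intro v hv
    rcases eq_or_ne v u with rfl | hvu
    · exact update_self ..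
    · rw [show e v = c v from update_of_ne hvu _ _] at hv ⊢
      exact (hfix v hv).symm
  refine isStarColoring_iff.mpr ⟨hc.isProperColoring.update fun w huw => ?_, fun a b x y h => ?_⟩
  · have hw : c w ≠ c u := fun h => hc.isProperColoring huw h.symm
    rw [← hfix w hw]
    exact hd.isProperColoring huw.symm
  by_cases ha : e a = c u
  · exact hc.not_isBicoloredP4 (h.of_update hc.isProperColoring hu ha)
  by_cases hy : e y = c u
  · exact hc.not_isBicoloredP4 (h.reverse.of_update hc.isProperColoring hu hy).reverse
  refine hd.not_isBicoloredP4 (h.congr fun v hv => hagree v ?_)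
  simp only [Set.mem_insert_iff, Set.mem_singleton_iff] at hv
  obtain ⟨-, -, -, -, -, -, hax, hby⟩ := h
  rcases hv with rfl | rfl | rfl | rfl
  exacts [ha, hby ▸ hy, hax ▸ ha, hy]

end StarColoring

section P4System

variable {G : SimpleGraph V} {c : V → ℕ} {u v w : V}

theorem P4Rel.symm (h : P4Rel G c u w) : P4Rel G c w u := by
  obtain ⟨hcol, b, x, h1, h2, h3, n1, n2, n3, d1, d2, d3⟩ := h
  exact ⟨hcol.symm, x, b, h3.symm, h2.symm, h1.symm, fun h => n2 h.symm, fun h => n1 h.symm,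
    fun h => n3 h.symm, d2.symm, d1.symm, d3.symm⟩

instance : Std.Symm (P4Rel G c) := ⟨fun _ _ => P4Rel.symm⟩

theorem color_eq_of_mem_p4System (h : u ∈ P4System G c v) : c v = c u := by
  induction h with
  | refl => rfl
  | tail _ hrel ih => exact ih.trans hrel.1

noncomputable def p4SystemRep (G : SimpleGraph V) (c : V → ℕ) (v : V) : V :=
  (Quot.mk (P4Rel G c) v).out

theorem mem_p4System_p4SystemRep (v : V) : v ∈ P4System G c (p4SystemRep G c v) := by
  have := Quot.eqvGen_exact (Quot.out_eq (Quot.mk (P4Rel G c) v))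
  rwa [Relation.EqvGen.eqvGen_eq_reflTransGen] at this

theorem P4Rel.p4SystemRep_eq (h : P4Rel G c u w) : p4SystemRep G c u = p4SystemRep G c w :=
  congrArg Quot.out (Quot.sound h)

end P4System

section Recoloring

variable [Fintype V] {G : SimpleGraph V} {c c' d : V → ℕ} {a b x y u : V} {i j : ℕ}

@[simp]
theorem mem_colorsUsed : j ∈ colorsUsed c ↔ ∃ v, c v = j := by
  simp [colorsUsed]

theorem card_colorsUsed_le (c : V → ℕ) : (colorsUsed c).card ≤ Fintype.card V :=
  Finset.card_image_le

theorem StarRecolorStep.card_colorsUsed_lt (h : StarRecolorStep G c' c) :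
    (colorsUsed c').card < (colorsUsed c).card := by
  obtain ⟨-, -, i, hi, hfix, hrec⟩ := h
  refine (Finset.card_le_card fun j hj => ?_).trans_lt (Finset.card_erase_lt_of_mem hi)
  obtain ⟨v, rfl⟩ := mem_colorsUsed.mp hj
  by_cases hv : c v = i
  · exact Finset.mem_erase.mpr (hrec v hv)
  · rw [hfix v hv]
    exact Finset.mem_erase.mpr ⟨hv, mem_colorsUsed.mpr ⟨v, rfl⟩⟩

theorem exists_isStarBColoring (G : SimpleGraph V) : ∃ c : V → ℕ, IsStarBColoring G c := by
  obtain ⟨c, hc, hmin⟩ := (measure fun c : V → ℕ => (colorsUsed c).card).wf.has_min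
    {c | IsStarColoring G c}
    ⟨_, isStarColoring_of_injective (Fin.val_injective.comp (Fintype.equivFin V).injective)⟩
  exact ⟨c, hc, fun c' hstep => hmin c' hstep.2.1 hstep.card_colorsUsed_lt⟩

variable [DecidableEq V]

theorem colorAvailableFor_iff : ColorAvailableFor G c u j ↔
    j ∈ colorsUsed c ∧ j ≠ c u ∧ IsStarColoring G (update c u j) := by
  simp only [ColorAvailableFor, ColorBlockedFor, not_or, not_not]

theorem not_starRecolorStep_of_forall_isStarBVertex
    (h : ∀ i ∈ colorsUsed c, ∃ v, c v = i ∧ IsStarBVertex G c v) (c' : V → ℕ) :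
    ¬ StarRecolorStep G c' c := by
  rintro ⟨hc, hc', i, hi, hfix, hrec⟩
  obtain ⟨v, rfl, hv⟩ := h i hi
  have havail : ∀ u, c u = c v → ColorAvailableFor G c u (c' u) := fun u hu => by
    obtain ⟨hne, hmem⟩ := hrec u hu
    rw [← hu] at hne hfix
    exact colorAvailableFor_iff.mpr ⟨hmem, hne, hc.update_of_recolor hc' hfix hne⟩
  obtain ⟨u, w, b, x, -, -, hP⟩ := hv _ (havail v rfl) c' hfix havail rfl
  exact hc'.not_isBicoloredP4 hP

variable (hc : IsStarColoring G c) (hfix : ∀ v, c v ≠ i → d v = c v)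
  (havail : ∀ v, c v = i → ColorAvailableFor G c v (d v))
include hc hfix havail

theorem IsStarColoring.isProperColoring_of_colorAvailableFor : IsProperColoring G d := by
  have hrecolored : ∀ p q, G.Adj p q → c p = i → d p ≠ d q := by
    intro p q hpq hp
    have hq : c q ≠ i := fun hq => hc.isProperColoring hpq (hp.trans hq.symm)
    have := ((colorAvailableFor_iff.mp (havail p hp)).2.2).isProperColoring hpq
    rwa [update_self, update_of_ne hpq.ne', ← hfix q hq] at this
  intro p q hpq
  by_cases hp : c p = i
  · exact hrecolored p q hpq hp
  by_cases hq : c q = i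
  · exact (hrecolored q p hpq.symm hq).symm
  rw [hfix p hp, hfix q hq]
  exact hc.isProperColoring hpq

theorem IsStarColoring.not_isBicoloredP4_of_unique_recolored
    (hu : ∀ v ∈ ({a, b, x, y} : Set V), c v = i → v = u) : ¬ IsBicoloredP4 G d a b x y := by
  intro h
  have hstar : IsStarColoring G (update c u (d u)) := by
    by_cases hui : c u = i
    · exact (colorAvailableFor_iff.mp (havail u hui)).2.2
    · rwa [hfix u hui, update_eq_self]
  refine hstar.not_isBicoloredP4 (h.congr fun v hv => ?_)
  rcases eq_or_ne v u with rfl | hvu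
  · rw [update_self]
  · rw [update_of_ne hvu, hfix v fun hvi => hvu (hu v hv hvi)]

theorem IsStarColoring.p4Rel_of_colorAvailableFor (h : IsBicoloredP4 G d a b x y) :
    c a = i ∧ c b ≠ i ∧ c x ≠ i ∧ P4Rel G c a y := by
  have hd := hc.isProperColoring_of_colorAvailableFor hfix havail
  have hsingle u hu := hc.not_isBicoloredP4_of_unique_recolored hfix havail (u := u) hu h
  have hax : c a = i → c x ≠ i := hc.not_recolored_of_isBicoloredP4 hfix h
  have hyb : c y = i → c b ≠ i := hc.not_recolored_of_isBicoloredP4 hfix h.reverse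
  obtain ⟨hab, hbx, hxy, hne_ax, hne_by, hne_ay, hdax, hdby⟩ := h
  have hprop := hc.isProperColoring
  have hab' : c a = i → c b ≠ i := fun ha hb => hprop hab (ha.trans hb.symm)
  have hbx' : c b = i → c x ≠ i := fun hb hx => hprop hbx (hb.trans hx.symm)
  have hxy' : c x = i → c y ≠ i := fun hx hy => hprop hxy (hx.trans hy.symm)
  by_cases hay : c a = i ∧ c y = i
  · obtain ⟨ha, hy⟩ := hay
    refine ⟨ha, hab' ha, fun hx => hxy' hx hy, ha.trans hy.symm, b, x, hab, hbx, hxy,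
      fun h => hd h hdax, fun h => hd h hdby, fun h => hprop h (ha.trans hy.symm),
      hne_ax, hne_by, hne_ay⟩
  exfalso
  simp only [Set.mem_insert_iff, Set.mem_singleton_iff, forall_eq_or_imp, forall_eq] at hsingle
  by_cases ha : c a = i
  · exact hsingle a (by tauto)
  by_cases hb : c b = i
  · exact hsingle b (by tauto)
  by_cases hx : c x = i
  · exact hsingle x (by tauto)
  · exact hsingle y ⟨(absurd · ha), (absurd · hb), (absurd · hx), fun _ => rfl⟩

end Recoloring

section Minimal

variable [Fintype V] [DecidableEq V] {G : SimpleGraph V} {c : V → ℕ} {v : V} {i : ℕ}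

theorem exists_recoloring_of_not_isStarBVertex (hv : ¬ IsStarBVertex G c v) :
    ∃ F : V → ℕ, (∀ u, c u ≠ c v → F u = c u) ∧
      (∀ u, c u = c v → ColorAvailableFor G c u (F u)) ∧
      ∀ a b x y, a ∈ P4System G c v → y ∈ P4System G c v → ¬ IsBicoloredP4 G F a b x y := by
  simp only [IsStarBVertex, BlockedForP4System, not_forall] at hv
  obtain ⟨-, -, F, hfix, havail, -, hnot⟩ := hv
  exact ⟨F, hfix, havail, fun a b x y ha hy hP => hnot ⟨a, y, b, x, ha, hy, hP⟩⟩

theorem IsStarColoring.exists_starRecolorStep (hc : IsStarColoring G c) (hi : i ∈ colorsUsed c)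
    (hnb : ∀ v, c v = i → ¬ IsStarBVertex G c v) : ∃ c', StarRecolorStep G c' c := by
  have hwitness : ∀ v, ∃ F : V → ℕ, c v = i → (∀ u, c u ≠ i → F u = c u) ∧
      (∀ u, c u = i → ColorAvailableFor G c u (F u)) ∧
      ∀ a b x y, a ∈ P4System G c v → y ∈ P4System G c v → ¬ IsBicoloredP4 G F a b x y := by
    intro v
    by_cases hv : c v = i
    · subst hv
      obtain ⟨F, hF⟩ := exists_recoloring_of_not_isStarBVertex (hnb v rfl)
      exact ⟨F, fun _ => hF⟩
    · exact ⟨c, fun hv' => absurd hv' hv⟩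
  choose F hF using hwitness
  let r := p4SystemRep G c
  have hri : ∀ u, c u = i → c (r u) = i := fun u hu =>
    (color_eq_of_mem_p4System (mem_p4System_p4SystemRep u)).trans hu
  -- every `P₄`-system of the class `i` is recolored by the witness chosen for its representative
  let d : V → ℕ := fun u => if c u = i then F (r u) u else c u
  have hfix : ∀ u, c u ≠ i → d u = c u := fun u hu => if_neg hu
  have havail : ∀ u, c u = i → ColorAvailableFor G c u (d u) := fun u hu => by
    simp only [d, if_pos hu]
    exact (hF _ (hri u hu)).2.1 u hu
  have hd : IsStarColoring G d := by
    refine isStarColoring_iff.mpr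
      ⟨hc.isProperColoring_of_colorAvailableFor hfix havail, fun a b x y h => ?_⟩
    obtain ⟨ha, hb, hx, hay⟩ := hc.p4Rel_of_colorAvailableFor hfix havail h
    have hy : c y = i := hay.1 ▸ ha
    have hray : r a = r y := hay.p4SystemRep_eq
    obtain ⟨hFfix, -, hFP4⟩ := hF (r a) (hri a ha)
    refine hFP4 a b x y (mem_p4System_p4SystemRep a) (hray ▸ mem_p4System_p4SystemRep y)
      (h.congr ?_)
    simp only [Set.EqOn, Set.mem_insert_iff, Set.mem_singleton_iff]
    rintro v (rfl | rfl | rfl | rfl)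
    · exact if_pos ha
    · rw [hfix v hb, hFfix v hb]
    · rw [hfix v hx, hFfix v hx]
    · simp only [d, if_pos hy, hray]
  refine ⟨d, hc, hd, i, hi, hfix, fun u hu => ?_⟩
  obtain ⟨hmem, hne, -⟩ := colorAvailableFor_iff.mp (havail u hu)
  exact ⟨hu ▸ hne, hmem⟩

theorem isStarBColoring_iff : IsStarBColoring G c ↔ IsStarColoring G c ∧
    ∀ i ∈ colorsUsed c, ∃ v, c v = i ∧ IsStarBVertex G c v := by
  refine ⟨fun ⟨hc, hmin⟩ => ⟨hc, fun i hi => ?_⟩,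
    fun ⟨hc, h⟩ => ⟨hc, not_starRecolorStep_of_forall_isStarBVertex h⟩⟩
  by_contra! hnb
  obtain ⟨c', hstep⟩ := hc.exists_starRecolorStep hi hnb
  exact hmin c' hstep

end Minimal

/-- **Corollary.** The star b-chromatic number `Sᵦ(G)` is the largest integer `k` such
that `G` admits a star coloring with `k` colors in which every color class contains a
star b-vertex. -/
theorem starBChromaticNumber_isGreatest [Fintype V] [DecidableEq V] (G : SimpleGraph V) :
    IsGreatest {k : ℕ | ∃ c : V → ℕ, IsStarColoring G c ∧ (colorsUsed c).card = k ∧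
        ∀ i ∈ colorsUsed c, ∃ v, c v = i ∧ IsStarBVertex G c v}
      (starBChromaticNumber G) := by
  have hset : {k : ℕ | ∃ c : V → ℕ, IsStarColoring G c ∧ (colorsUsed c).card = k ∧
        ∀ i ∈ colorsUsed c, ∃ v, c v = i ∧ IsStarBVertex G c v} =
      {n | ∃ c : V → ℕ, IsStarBColoring G c ∧ (colorsUsed c).card = n} := by
    ext n
    simp [isStarBColoring_iff, and_comm, and_left_comm]
  rw [starBChromaticNumber, hset]
  have hbdd : BddAbove {n | ∃ c : V → ℕ, IsStarBColoring G c ∧ (colorsUsed c).card = n} :=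
    ⟨Fintype.card V, by rintro _ ⟨c, -, rfl⟩; exact card_colorsUsed_le c⟩
  obtain ⟨c, hc⟩ := exists_isStarBColoring G
  exact ⟨Nat.sSup_mem ⟨_, c, hc, rfl⟩ hbdd, fun _ hn => le_csSup hbdd hn⟩
end

section
/- For every natural number M there exists a finite tree T with m_s(T) − S_b(T) > M; that is, the difference between the m_s-degree and the star b-chromatic number is unbounded on the class of trees. -/
/-!
Definitions for star colorings, star recoloring steps, the strict partial order `≺ₛ`,
star b-vertices, the star (b-)chromatic number, star degrees and related notions,
following Božović, Mesarič Štesl, Peterin,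
"On star b-chromatic number of a graph".
-/

variable {V : Type*}

/-!
Take the tree with a root joined to `k` vertices `mid i`, each `mid i` joined to a hub `hub i`
carrying `r` leaves. Explicit star colorings block `k + 1 + r` colors at every `mid i` and `r + 3`
at every `hub i`, so for `r ≥ 2k - 4` these `2k` vertices have star degree at least `2k - 1` and
`mₛ ≥ 2k`.

Every path on four vertices of this tree has the root and some `hub i` at distance two, so it can
only be bicolored when `hub i` repeats the root's color. Let leg `i` reserve the color of `hub i`,
or that of `mid i` when `hub i` repeats the root's color. A color other than the root's and
reserved by no leg appears only on leaves and on middle vertices whose hub avoids the root's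
color, so merging one such color class into another one is a star recoloring step. A star coloring
with `k + 3` colors has two such colors; hence `Sᵦ ≤ k + 2` and `mₛ - Sᵦ ≥ k - 2`.
-/

section Iso

variable {V W : Type*} {G : SimpleGraph V} {H : SimpleGraph W}

lemma IsStarColoring.comp_embedding {c : W → ℕ} (hc : IsStarColoring H c) (f : G ↪g H) :
    IsStarColoring G (c ∘ f) :=
  ⟨fun _ _ huw => hc.1 (f.map_adj_iff.2 huw),
    fun _ _ _ _ hab hbx hxy hax hby hay => hc.2 _ _ _ _ (f.map_adj_iff.2 hab)
      (f.map_adj_iff.2 hbx) (f.map_adj_iff.2 hxy) (f.injective.ne hax) (f.injective.ne hby)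
      (f.injective.ne hay)⟩

lemma isStarColoring_comp_iso (e : G ≃g H) {c : W → ℕ} :
    IsStarColoring G (c ∘ e) ↔ IsStarColoring H c := by
  refine ⟨fun hc => ?_, fun hc => hc.comp_embedding e.toEmbedding⟩
  simpa [Function.comp_assoc] using hc.comp_embedding e.symm.toEmbedding

lemma colorsUsed_comp_of_surjective [Fintype V] [Fintype W] {f : V → W}
    (hf : Function.Surjective f) (c : W → ℕ) : colorsUsed (c ∘ f) = colorsUsed c := by
  ext n
  simpa [colorsUsed] using (hf.exists (p := fun w => c w = n)).symm

lemma colorBlockedFor_comp_iso [DecidableEq V] [DecidableEq W] (e : G ≃g H) {c : W → ℕ}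
    {v : V} {j : ℕ} :
    ColorBlockedFor G (c ∘ e) v j ↔ ColorBlockedFor H c (e v) j := by
  rw [ColorBlockedFor, ColorBlockedFor, ← Function.update_comp_eq_of_injective c e.injective,
    isStarColoring_comp_iso, Function.comp_apply]

variable [Fintype V] [Fintype W]

lemma StarRecolorStep.comp_iso {c' c : W → ℕ} (h : StarRecolorStep H c' c) (e : G ≃g H) :
    StarRecolorStep G (c' ∘ e) (c ∘ e) := by
  obtain ⟨hc, hc', i, hi, hkeep, hmove⟩ := h
  refine ⟨(isStarColoring_comp_iso e).2 hc, (isStarColoring_comp_iso e).2 hc', i, ?_,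
    fun v => hkeep (e v), fun v => ?_⟩
  · rwa [colorsUsed_comp_of_surjective e.surjective]
  · simpa [colorsUsed_comp_of_surjective e.surjective] using hmove (e v)

lemma isStarBColoring_comp_iso (e : G ≃g H) {c : W → ℕ} :
    IsStarBColoring G (c ∘ e) ↔ IsStarBColoring H c := by
  refine ⟨fun ⟨hc, hmin⟩ => ⟨(isStarColoring_comp_iso e).1 hc, fun _ h => ?_⟩,
    fun ⟨hc, hmin⟩ => ⟨(isStarColoring_comp_iso e).2 hc, fun c' h => ?_⟩⟩
  · exact hmin _ (h.comp_iso e)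
  · refine hmin (c' ∘ e.symm) ?_
    simpa [Function.comp_assoc] using h.comp_iso e.symm

lemma starBChromaticNumber_congr (e : G ≃g H) :
    starBChromaticNumber G = starBChromaticNumber H := by
  unfold starBChromaticNumber
  congr 1
  ext n
  simp only [Set.mem_ofPred_eq]
  rw [e.injective.surjective_comp_right.exists]
  simp only [isStarBColoring_comp_iso, colorsUsed_comp_of_surjective e.surjective]

variable [DecidableEq V] [DecidableEq W]

lemma starDegree_congr (e : G ≃g H) (v : V) : starDegree G v = starDegree H (e v) := by
  unfold starDegree
  congr 1
  ext n
  simp only [Set.mem_ofPred_eq]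
  rw [e.injective.surjective_comp_right.exists]
  simp only [isStarColoring_comp_iso, colorsUsed_comp_of_surjective e.surjective,
    colorBlockedFor_comp_iso]

lemma msDegree_congr (e : G ≃g H) : msDegree G = msDegree H := by
  unfold msDegree
  congr 1
  ext n
  simp only [Set.mem_ofPred_eq]
  rw [e.symm.toEquiv.finsetCongr.surjective.exists]
  simp only [Equiv.finsetCongr_apply, Finset.card_map, Finset.forall_mem_map, starDegree_congr e,
    Equiv.coe_toEmbedding, RelIso.coe_fn_toEquiv, RelIso.apply_symm_apply]

end Iso

section Bounds

variable {V : Type*} [DecidableEq V] {G : SimpleGraph V} {c : V → ℕ} {v : V}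

lemma le_starDegree [Fintype V] {L : ℕ} (hc : IsStarColoring G c)
    (hL : ∀ δ < L, ∃ u, c u = δ ∧ ColorBlockedFor G c v (c u)) : L ≤ starDegree G v := by
  set B := {j | j ∈ colorsUsed c ∧ ColorBlockedFor G c v j}
  have hbdd : BddAbove {n | ∃ c : V → ℕ, IsStarColoring G c ∧
      {j | j ∈ colorsUsed c ∧ ColorBlockedFor G c v j}.ncard = n} := by
    refine ⟨Fintype.card V, ?_⟩
    rintro _ ⟨c, -, rfl⟩
    calc _ ≤ (colorsUsed c : Set ℕ).ncard :=
          Set.ncard_le_ncard (fun _ hj => hj.1) (Finset.finite_toSet _)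
      _ ≤ Fintype.card V := by rw [Set.ncard_coe_finset]; exact Finset.card_image_le
  have hrange : (Finset.range L : Set ℕ) ⊆ B := by
    intro δ hδ
    obtain ⟨u, rfl, hu⟩ := hL δ (by simpa using hδ)
    exact ⟨Finset.mem_image_of_mem c (Finset.mem_univ u), hu⟩
  calc L = (Finset.range L : Set ℕ).ncard := by simp
    _ ≤ B.ncard := Set.ncard_le_ncard hrange ((Finset.finite_toSet _).subset fun _ hj => hj.1)
    _ ≤ starDegree G v := le_csSup hbdd ⟨c, hc, rfl⟩

lemma le_msDegree [Fintype V] (s : Finset V) (hs : ∀ v ∈ s, s.card - 1 ≤ starDegree G v) :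
    s.card ≤ msDegree G :=
  le_csSup ⟨Fintype.card V, by rintro _ ⟨t, rfl, -⟩; exact t.card_le_univ⟩ ⟨s, rfl, hs⟩

lemma colorBlockedFor_of_adj {u : V} (h : G.Adj v u) : ColorBlockedFor G c v (c u) :=
  Or.inr fun hs => hs.1 h (by simp [Function.update_of_ne h.ne.symm])

lemma colorBlockedFor_of_path_last {a b x : V} (hab : G.Adj a b) (hbx : G.Adj b x)
    (hxv : G.Adj x v) (hax : a ≠ x) (hbv : b ≠ v) (hav : a ≠ v) (hc : c a = c x) :
    ColorBlockedFor G c v (c b) :=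
  Or.inr fun hs => hs.2 a b x v hab hbx hxv hax hbv hav (by
    simp [Function.update_of_ne hav, Function.update_of_ne hbv, Function.update_of_ne hxv.ne, hc])

lemma colorBlockedFor_of_path_third {a b y : V} (hab : G.Adj a b) (hbv : G.Adj b v)
    (hvy : G.Adj v y) (hav : a ≠ v) (hby : b ≠ y) (hay : a ≠ y) (hc : c b = c y) :
    ColorBlockedFor G c v (c a) :=
  Or.inr fun hs => hs.2 a b v y hab hbv hvy hav hby hay (by
    simp [Function.update_of_ne hav, Function.update_of_ne hbv.ne,
      Function.update_of_ne hvy.ne.symm, hc])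

end Bounds

section Merge

variable {V : Type*} {c : V → ℕ} {α β : ℕ}

def mergeColor (c : V → ℕ) (α β : ℕ) : V → ℕ := fun v => if c v = α then β else c v

lemma mergeColor_ne {v : V} {d : ℕ} (hβ : β ≠ d) (hv : c v ≠ d) :
    mergeColor c α β v ≠ d := by
  unfold mergeColor
  split_ifs <;> assumption

lemma starRecolorStep_mergeColor [Fintype V] {G : SimpleGraph V} (hc : IsStarColoring G c)
    (hα : α ∈ colorsUsed c) (hβ : β ∈ colorsUsed c) (hαβ : α ≠ β)
    (hmerge : IsStarColoring G (mergeColor c α β)) :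
    StarRecolorStep G (mergeColor c α β) c :=
  ⟨hc, hmerge, α, hα, fun _ hv => if_neg hv,
    fun _ hv => by simp [mergeColor, hv, hαβ.symm, hβ]⟩

end Merge

section ParentTree

variable {V : Type*} (root : V) (p : V → V)

def parentGraph : SimpleGraph V := SimpleGraph.fromRel fun u v => u ≠ root ∧ v = p u

variable {root p} {h : V → ℕ}

lemma parentGraph_adj_parent (hp : ∀ v ≠ root, h (p v) < h v) {v : V} (hv : v ≠ root) :
    (parentGraph root p).Adj v (p v) :=
  ⟨fun hvp => (hp v hv).ne (by rw [← hvp]), .inl ⟨hv, rfl⟩⟩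

lemma parentGraph_connected (hp : ∀ v ≠ root, h (p v) < h v) :
    (parentGraph root p).Connected := by
  have hreach : ∀ v, (parentGraph root p).Reachable v root := by
    intro v
    induction hv : h v using Nat.strong_induction_on generalizing v with
    | _ n ih =>
      by_cases hroot : v = root
      · exact hroot ▸ .rfl
      · exact (parentGraph_adj_parent hp hroot).reachable.trans (ih _ (hv ▸ hp v hroot) _ rfl)
  exact (SimpleGraph.connected_iff_exists_forall_reachable _).2 ⟨root, fun v => (hreach v).symm⟩

lemma card_edgeSet_parentGraph [Finite V] (hp : ∀ v ≠ root, h (p v) < h v) :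
    Nat.card (parentGraph root p).edgeSet + 1 = Nat.card V := by
  let toEdge : ({root}ᶜ : Set V) → (parentGraph root p).edgeSet :=
    fun v => ⟨s(v, p v), parentGraph_adj_parent hp v.2⟩
  have hinj : Function.Injective toEdge := by
    rintro ⟨u, hu⟩ ⟨v, hv⟩ huv
    rcases Sym2.eq_iff.1 (congrArg Subtype.val huv) with ⟨rfl, -⟩ | ⟨hup, hpu⟩
    · rfl
    · have hu' := hp u hu
      have hv' := hp v hv
      rw [hpu] at hu'
      rw [← hup] at hv'
      exact (hu'.trans hv').false.elim
  have hsurj : Function.Surjective toEdge := by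
    rintro ⟨e, he⟩
    induction e using Sym2.ind with
    | _ a b =>
      obtain ⟨-, ⟨ha, hb⟩ | ⟨hb, ha⟩⟩ := he
      · dsimp only at ha hb
        subst hb
        exact ⟨⟨a, ha⟩, rfl⟩
      · dsimp only at ha hb
        subst ha
        exact ⟨⟨b, hb⟩, Subtype.ext Sym2.eq_swap⟩
  rw [← Nat.card_congr (Equiv.ofBijective toEdge ⟨hinj, hsurj⟩), Nat.card_coe_set_eq,
    ← Set.ncard_singleton root, Set.ncard_compl_add_ncard]

lemma parentGraph_isTree [Finite V] (hp : ∀ v ≠ root, h (p v) < h v) :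
    (parentGraph root p).IsTree :=
  SimpleGraph.isTree_iff_connected_and_card.2
    ⟨parentGraph_connected hp, card_edgeSet_parentGraph hp⟩

end ParentTree

namespace Bush

abbrev Vert (k r : ℕ) := Unit ⊕ Fin k ⊕ Fin k ⊕ Fin k × Fin r

variable {k r : ℕ}

abbrev root : Vert k r := .inl ()
abbrev mid (i : Fin k) : Vert k r := .inr (.inl i)
abbrev hub (i : Fin k) : Vert k r := .inr (.inr (.inl i))
abbrev leaf (i : Fin k) (s : Fin r) : Vert k r := .inr (.inr (.inr (i, s)))

def parent : Vert k r → Vert k r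
  | .inl _ => root
  | .inr (.inl _) => root
  | .inr (.inr (.inl i)) => mid i
  | .inr (.inr (.inr (i, _))) => hub i

def depth : Vert k r → ℕ
  | .inl _ => 0
  | .inr (.inl _) => 1
  | .inr (.inr (.inl _)) => 2
  | .inr (.inr (.inr _)) => 3

variable (k r) in
def bush : SimpleGraph (Vert k r) := parentGraph root parent

lemma bush_isTree : (bush k r).IsTree :=
  parentGraph_isTree (h := depth) (by rintro (_ | _ | _ | _) hv <;> simp_all [depth, parent])

variable {u : Vert k r}

lemma adj_root : (bush k r).Adj root u ↔ ∃ i, u = mid i := by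
  rcases u with _ | j | j | ⟨j, t⟩ <;> simp [bush, parentGraph, parent]

lemma adj_mid {i : Fin k} : (bush k r).Adj (mid i) u ↔ u = root ∨ u = hub i := by
  rcases u with _ | j | j | ⟨j, t⟩ <;> simp [bush, parentGraph, parent, eq_comm]

lemma adj_hub {i : Fin k} : (bush k r).Adj (hub i) u ↔ u = mid i ∨ ∃ s, u = leaf i s := by
  rcases u with _ | j | j | ⟨j, t⟩ <;> simp [bush, parentGraph, parent, eq_comm]

lemma adj_leaf {i : Fin k} {s : Fin r} : (bush k r).Adj (leaf i s) u ↔ u = hub i := by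
  rcases u with _ | j | j | ⟨j, t⟩ <;> simp [bush, parentGraph, parent, eq_comm]

lemma path3_cases {a b x y : Vert k r} (hab : (bush k r).Adj a b) (hbx : (bush k r).Adj b x)
    (hxy : (bush k r).Adj x y) (hax : a ≠ x) (hby : b ≠ y) :
    (∃ i j, i ≠ j ∧ ((a = mid j ∧ b = root ∧ x = mid i ∧ y = hub i) ∨
      (a = hub i ∧ b = mid i ∧ x = root ∧ y = mid j))) ∨
    (∃ i s, (a = root ∧ b = mid i ∧ x = hub i ∧ y = leaf i s) ∨
      (a = leaf i s ∧ b = hub i ∧ x = mid i ∧ y = root)) := by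
  rcases b with _ | i | i | ⟨i, s⟩
  · obtain ⟨j, rfl⟩ := adj_root.1 hab.symm
    obtain ⟨i, rfl⟩ := adj_root.1 hbx
    rcases adj_mid.1 hxy with rfl | rfl
    · exact absurd rfl hby
    · exact Or.inl ⟨i, j, fun h => hax (h ▸ rfl), Or.inl ⟨rfl, rfl, rfl, rfl⟩⟩
  · rcases adj_mid.1 hbx with rfl | rfl
    · obtain ⟨j, rfl⟩ := adj_root.1 hxy
      rcases adj_mid.1 hab.symm with rfl | rfl
      · exact absurd rfl hax
      · exact Or.inl ⟨i, j, fun h => hby (h ▸ rfl), Or.inr ⟨rfl, rfl, rfl, rfl⟩⟩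
    · rcases adj_hub.1 hxy with rfl | ⟨s, rfl⟩
      · exact absurd rfl hby
      · rcases adj_mid.1 hab.symm with rfl | rfl
        · exact Or.inr ⟨i, s, Or.inl ⟨rfl, rfl, rfl, rfl⟩⟩
        · exact absurd rfl hax
  · rcases adj_hub.1 hbx with rfl | ⟨s, rfl⟩
    · rcases adj_mid.1 hxy with rfl | rfl
      · rcases adj_hub.1 hab.symm with rfl | ⟨s, rfl⟩
        · exact absurd rfl hax
        · exact Or.inr ⟨i, s, Or.inr ⟨rfl, rfl, rfl, rfl⟩⟩
      · exact absurd rfl hby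
    · exact absurd (adj_leaf.1 hxy).symm hby
  · exact absurd ((adj_leaf.1 hab.symm).trans (adj_leaf.1 hbx).symm) hax

lemma isStarColoring_bush_iff {c : Vert k r → ℕ} :
    IsStarColoring (bush k r) c ↔
      (∀ i, c root ≠ c (mid i)) ∧ (∀ i, c (mid i) ≠ c (hub i)) ∧
      (∀ i s, c (hub i) ≠ c (leaf i s)) ∧
      (∀ i j, i ≠ j → c (hub i) = c root → c (mid i) ≠ c (mid j)) ∧
      (∀ i s, c (hub i) = c root → c (mid i) ≠ c (leaf i s)) := by
  constructor
  · intro hc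
    refine ⟨fun i => hc.1 (adj_root.2 ⟨i, rfl⟩), fun i => hc.1 (adj_mid.2 (.inr rfl)),
      fun i s => hc.1 (adj_hub.2 (.inr ⟨s, rfl⟩)), fun i j hij hroot hmid => ?_,
      fun i s hroot hleaf => ?_⟩
    · exact hc.2 (mid j) root (mid i) (hub i) (adj_mid.2 (.inl rfl)) (adj_root.2 ⟨i, rfl⟩)
        (adj_mid.2 (.inr rfl)) (by simpa using hij.symm) (by simp) (by simp)
        ⟨hmid.symm, hroot.symm⟩
    · exact hc.2 root (mid i) (hub i) (leaf i s) (adj_root.2 ⟨i, rfl⟩) (adj_mid.2 (.inr rfl))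
        (adj_hub.2 (.inr ⟨s, rfl⟩)) (by simp) (by simp) (by simp) ⟨hroot.symm, hleaf⟩
  · rintro ⟨h1, h2, h3, h4, h5⟩
    refine ⟨fun u w huw => ?_, fun a b x y hab hbx hxy hax hby _ => ?_⟩
    · rcases u with _ | i | i | ⟨i, s⟩
      · obtain ⟨i, rfl⟩ := adj_root.1 huw
        exact h1 i
      · rcases adj_mid.1 huw with rfl | rfl
        exacts [(h1 i).symm, h2 i]
      · rcases adj_hub.1 huw with rfl | ⟨s, rfl⟩
        exacts [(h2 i).symm, h3 i s]
      · rw [adj_leaf.1 huw]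
        exact (h3 i s).symm
    · rcases path3_cases hab hbx hxy hax hby with
        ⟨i, j, hij, ⟨rfl, rfl, rfl, rfl⟩ | ⟨rfl, rfl, rfl, rfl⟩⟩ |
        ⟨i, s, ⟨rfl, rfl, rfl, rfl⟩ | ⟨rfl, rfl, rfl, rfl⟩⟩
      · exact fun h => h4 i j hij h.2.symm h.1.symm
      · exact fun h => h4 i j hij h.1 h.2
      · exact fun h => h5 i s h.1.symm h.2
      · exact fun h => h5 i s h.2 h.1.symm

section Recoloring

variable {c : Vert k r → ℕ} {α β : ℕ}

def reserved (c : Vert k r → ℕ) (j : Fin k) : ℕ :=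
  if c (hub j) = c root then c (mid j) else c (hub j)

def IsUnreserved (c : Vert k r → ℕ) (α : ℕ) : Prop :=
  α ≠ c root ∧ ∀ j, reserved c j ≠ α

lemma IsUnreserved.hub_ne (hα : IsUnreserved c α) (j : Fin k) : c (hub j) ≠ α := by
  have := hα.2 j
  unfold reserved at this
  split_ifs at this with h
  · exact h ▸ hα.1.symm
  · exact this

lemma IsUnreserved.mid_ne (hα : IsUnreserved c α) {j : Fin k} (hj : c (hub j) = c root) :
    c (mid j) ≠ α := by
  simpa [reserved, hj] using hα.2 j

lemma exists_two_isUnreserved (hc : k + 3 ≤ (colorsUsed c).card) :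
    ∃ α ∈ colorsUsed c, ∃ β ∈ colorsUsed c,
      α ≠ β ∧ IsUnreserved c α ∧ IsUnreserved c β := by
  set F := colorsUsed c \ insert (c root) (Finset.univ.image (reserved c))
  have hF : 1 < F.card := by
    have h1 : (colorsUsed c).card ≤ F.card + _ := Finset.card_le_card_sdiff_add_card
    have h2 := Finset.card_insert_le (c root) (Finset.univ.image (reserved c))
    have h3 : (Finset.univ.image (reserved c)).card ≤ k :=
      Finset.card_image_le.trans (by simp)
    omega
  obtain ⟨α, hα, β, hβ, hαβ⟩ := Finset.one_lt_card.1 hF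
  simp only [F, Finset.mem_sdiff, Finset.mem_insert, Finset.mem_image, Finset.mem_univ, true_and,
    not_or, not_exists] at hα hβ
  exact ⟨α, hα.1, β, hβ.1, hαβ, ⟨hα.2.1, hα.2.2⟩, ⟨hβ.2.1, hβ.2.2⟩⟩

lemma isStarColoring_mergeColor (hc : IsStarColoring (bush k r) c) (hα : IsUnreserved c α)
    (hβ : IsUnreserved c β) : IsStarColoring (bush k r) (mergeColor c α β) := by
  obtain ⟨h1, h2, h3, h4, h5⟩ := isStarColoring_bush_iff.1 hc
  have hroot : mergeColor c α β root = c root := if_neg hα.1.symm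
  have hhub j : mergeColor c α β (hub j) = c (hub j) := if_neg (hα.hub_ne j)
  have hmid {i} (hi : c (hub i) = c root) : mergeColor c α β (mid i) = c (mid i) :=
    if_neg (hα.mid_ne hi)
  refine isStarColoring_bush_iff.2 ⟨fun i => ?_, fun i => ?_, fun i s => ?_, fun i j hij hi => ?_,
    fun i s hi => ?_⟩
  · rw [hroot]
    exact (mergeColor_ne hβ.1 (h1 i).symm).symm
  · rw [hhub]
    exact mergeColor_ne (hβ.hub_ne i).symm (h2 i)
  · rw [hhub]
    exact (mergeColor_ne (hβ.hub_ne i).symm (h3 i s).symm).symm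
  · rw [hhub, hroot] at hi
    rw [hmid hi]
    exact (mergeColor_ne (hβ.mid_ne hi).symm (h4 i j hij hi).symm).symm
  · rw [hhub, hroot] at hi
    rw [hmid hi]
    exact (mergeColor_ne (hβ.mid_ne hi).symm (h5 i s hi).symm).symm

lemma card_colorsUsed_le_of_isStarBColoring (hc : IsStarBColoring (bush k r) c) :
    (colorsUsed c).card ≤ k + 2 := by
  by_contra! hcard
  obtain ⟨α, hαU, β, hβU, hαβ, hα, hβ⟩ := exists_two_isUnreserved (c := c) hcard
  exact hc.2 _
    (starRecolorStep_mergeColor hc.1 hαU hβU hαβ (isStarColoring_mergeColor hc.1 hα hβ))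

lemma starBChromaticNumber_bush_le : starBChromaticNumber (bush k r) ≤ k + 2 :=
  csSup_le' fun _ ⟨_, hc, hn⟩ => hn ▸ card_colorsUsed_le_of_isStarBColoring hc

end Recoloring

def midWitness : Vert k r → ℕ
  | .inl _ => 0
  | .inr (.inl j) => j + 1
  | .inr (.inr (.inl _)) => 0
  | .inr (.inr (.inr (_, s))) => k + 1 + s

def hubWitness : Vert k r → ℕ
  | .inl _ => 0
  | .inr (.inl _) => 1
  | .inr (.inr (.inl _)) => 2
  | .inr (.inr (.inr (_, s))) => 3 + s

lemma le_starDegree_mid (i : Fin k) : k + 1 + r ≤ starDegree (bush k r) (mid i) := by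
  have hc : IsStarColoring (bush k r) midWitness := by
    refine isStarColoring_bush_iff.2 ⟨?_, ?_, ?_, ?_, ?_⟩ <;> intros <;> simp [midWitness] <;>
      omega
  refine le_starDegree hc fun δ hδ => ?_
  rcases δ with _ | δ
  · exact ⟨root, rfl, colorBlockedFor_of_adj (adj_mid.2 (.inl rfl))⟩
  by_cases hδk : δ < k
  · refine ⟨mid ⟨δ, hδk⟩, rfl, ?_⟩
    by_cases hi : (⟨δ, hδk⟩ : Fin k) = i
    · exact .inl (by rw [hi])
    · exact colorBlockedFor_of_path_third (adj_mid.2 (.inl rfl)) (adj_root.2 ⟨i, rfl⟩)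
        (adj_mid.2 (.inr rfl)) (by simpa using hi) (by simp) (by simp) rfl
  · refine ⟨leaf i ⟨δ - k, by omega⟩, by simp [midWitness]; omega, ?_⟩
    exact colorBlockedFor_of_path_third (adj_leaf.2 rfl) (adj_hub.2 (.inl rfl))
      (adj_mid.2 (.inl rfl)) (by simp) (by simp) (by simp) rfl

lemma le_starDegree_hub (hk : 2 ≤ k) (i : Fin k) : r + 3 ≤ starDegree (bush k r) (hub i) := by
  have hc : IsStarColoring (bush k r) hubWitness := by
    refine isStarColoring_bush_iff.2 ⟨?_, ?_, ?_, ?_, ?_⟩ <;> intros <;> simp_all [hubWitness]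
    omega
  obtain ⟨j, hj⟩ := Fintype.exists_ne_of_one_lt_card (by simp; omega) i
  refine le_starDegree hc fun δ hδ => ?_
  match δ, hδ with
  | 0, _ => exact ⟨root, rfl, colorBlockedFor_of_path_last (a := mid j) (adj_mid.2 (.inl rfl))
      (adj_root.2 ⟨i, rfl⟩) (adj_mid.2 (.inr rfl)) (by simp [hj]) (by simp) (by simp) rfl⟩
  | 1, _ => exact ⟨mid i, rfl, colorBlockedFor_of_adj (adj_hub.2 (.inl rfl))⟩
  | 2, _ => exact ⟨hub i, rfl, .inl rfl⟩
  | s + 3, hs => exact ⟨leaf i ⟨s, by omega⟩, by simp [hubWitness]; omega,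
      colorBlockedFor_of_adj (adj_hub.2 (.inr ⟨_, rfl⟩))⟩

lemma le_msDegree_bush (hk : 2 ≤ k) (hr : 2 * k ≤ r + 4) : 2 * k ≤ msDegree (bush k r) := by
  let f : Fin k ⊕ Fin k ↪ Vert k r :=
    ⟨Sum.elim mid hub, by rintro (i | i) (j | j) <;> simp⟩
  have hcard : (Finset.univ.map f).card = 2 * k := by simp [two_mul]
  refine hcard ▸ le_msDegree _ fun v hv => hcard ▸ ?_
  obtain ⟨i | i, -, rfl⟩ := Finset.mem_map.1 hv
  · exact (show 2 * k - 1 ≤ k + 1 + r by omega).trans (le_starDegree_mid i)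
  · exact (show 2 * k - 1 ≤ r + 3 by omega).trans (le_starDegree_hub hk i)

end Bush

/-- **Theorem.** The difference `mₛ(T) − Sᵦ(T)` is unbounded on the class of trees:
for every natural number `M` there is a finite tree `T` with `mₛ(T) − Sᵦ(T) > M`. -/
theorem msDegree_sub_starB_unbounded_on_trees (M : ℕ) :
    ∃ (m : ℕ) (T : SimpleGraph (Fin m)), T.IsTree ∧
      starBChromaticNumber T + M < msDegree T := by
  let e := (Bush.bush (M + 3) (2 * (M + 3))).overFinIso rfl
  refine ⟨_, _, e.isTree_iff.1 Bush.bush_isTree, ?_⟩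
  rw [← starBChromaticNumber_congr e, ← msDegree_congr e]
  have hSb := Bush.starBChromaticNumber_bush_le (k := M + 3) (r := 2 * (M + 3))
  have hms := Bush.le_msDegree_bush (k := M + 3) (r := 2 * (M + 3)) (by omega) (by omega)
  omega
end
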